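/- For the determinant a(x,y)_{ij} built from the initial value problem, the entries of the inverse wave-matrix satisfy: \hat{w}_k^{*(∞)}(s) = det[a_{ij}]_{i=m,...,s-1,s+k; j=m,...,s} / det[a_{ij}]_{i,j=m,...,s}, and the generating sum \sum_{k=0}^{n-s-1} \lambda^k \hat{w}_k^{*(∞)}(s) = \tau(s+1, x+\epsilon(\lambda), y)/\tau(s+1,x,y), where \tau(s,x,y) = det[a_{ij}]_{m≤i,j≤s-1} and \epsilon(\lambda) = (\lambda, \lambda^2/2, ...). -/

import Mathlib

/-!
Since `Λ` is nilpotent, the Miwa shift adds `∑ λ^k/k Λ^k = -log (1 - λΛ)` to the exponent and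
so multiplies `a(x,y)` on the left by `(1 - λΛ)⁻¹ = ∑ λ^k Λ^k`: modulo `X^d` this is the
polynomial identity `exp (-log (1 - X)) · (1 - X) = 1`, whose left side has constant term `1`
and derivative divisible by `X^(d-1)`. Thus row `i` of the shifted matrix is `∑ₖ λ^k a_{i+k}`.
Multiplying its leading `(s+1)`-block by the unitriangular `1 - λΛ` turns rows `0, …, s-1`
back into those of `a` and keeps row `s = ∑ₖ λ^k a_{s+k}`; expanding the determinant along that
row gives `∑ₖ λ^k` times the numerators of `ŵ*_k(s)`.
-/

open Finset

/-- The upper shift matrix `Λ` with `Λ_{k,k+1} = 1`. -/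
def shiftU (d : ℕ) : Matrix (Fin d) (Fin d) ℂ :=
  Matrix.of fun i j => if (i : ℕ) + 1 = (j : ℕ) then 1 else 0

/-- `a(x,y) = exp(∑_k x_k Λ^k) · A · exp(-∑_k y_k (Λᵀ)^k)`. -/
noncomputable def amat (d : ℕ) (A : Matrix (Fin d) (Fin d) ℂ) (x y : ℕ → ℂ) :
    Matrix (Fin d) (Fin d) ℂ :=
  NormedSpace.exp (∑ k ∈ Finset.Icc 1 (d - 1), x k • (shiftU d) ^ k) * A *
    NormedSpace.exp (-∑ k ∈ Finset.Icc 1 (d - 1), y k • ((shiftU d).transpose) ^ k)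

/-- `a(x,y)` extended by zero to all of `ℕ × ℕ`. -/
noncomputable def abar (d : ℕ) (A : Matrix (Fin d) (Fin d) ℂ) (x y : ℕ → ℂ)
    (i j : ℕ) : ℂ :=
  if h : i < d ∧ j < d then amat d A x y ⟨i, h.1⟩ ⟨j, h.2⟩ else 0

/-- The tau-function `τ(s,x,y) = det[a_{ij}(x,y)]` over the leading `s × s` block. -/
noncomputable def tauF (d : ℕ) (A : Matrix (Fin d) (Fin d) ℂ) (x y : ℕ → ℂ) (s : ℕ) : ℂ :=
  Matrix.det fun i j : Fin s => abar d A x y i j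

/-- The inverse wave-matrix entry
`ŵ*^{(∞)}_k(s) = det[a_{ij}]_{i = 0,…,s-1, s+k; j = 0,…,s} / det[a_{ij}]_{i,j = 0,…,s}`
(indices written 0-based). -/
noncomputable def wstarInf (d : ℕ) (A : Matrix (Fin d) (Fin d) ℂ) (x y : ℕ → ℂ)
    (s k : ℕ) : ℂ :=
  (Matrix.det fun i j : Fin (s + 1) =>
      abar d A x y (if (i : ℕ) < s then (i : ℕ) else s + k) (j : ℕ)) /
    tauF d A x y (s + 1)

open Polynomial
open scoped Nat

namespace Polynomial

theorem aeval_eq_zero_of_X_pow_dvd {R 𝔸 : Type*} [CommSemiring R] [Semiring 𝔸]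
    [Algebra R 𝔸] {N : 𝔸} {m : ℕ} (hN : N ^ m = 0) {q : R[X]} (hq : X ^ m ∣ q) :
    aeval N q = 0 := by
  obtain ⟨r, rfl⟩ := hq
  rw [map_mul, map_pow, aeval_X, hN, zero_mul]

variable {K : Type*} [Field K]

noncomputable def truncNegLogOneSub (n : ℕ) : K[X] :=
  ∑ k ∈ Icc 1 n, (k : K)⁻¹ • X ^ k

noncomputable def truncExp (n : ℕ) (p : K[X]) : K[X] :=
  ∑ i ∈ range n, (i ! : K)⁻¹ • p ^ i

theorem X_dvd_truncNegLogOneSub (n : ℕ) : X ∣ (truncNegLogOneSub n : K[X]) :=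
  Finset.dvd_sum fun k hk => by
    rw [smul_eq_C_mul]; exact (dvd_pow_self X (by simp at hk; omega)).mul_left _

theorem truncExp_succ (n : ℕ) (p : K[X]) :
    truncExp (n + 1) p = truncExp n p + (n ! : K)⁻¹ • p ^ n :=
  sum_range_succ _ _

variable [CharZero K]

theorem derivative_truncNegLogOneSub (n : ℕ) :
    derivative (truncNegLogOneSub n : K[X]) = ∑ k ∈ range n, X ^ k := by
  rw [truncNegLogOneSub, map_sum, ← Finset.Ico_add_one_right_eq_Icc, sum_Ico_eq_sum_range]
  refine sum_congr (by simp) fun k _ => ?_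
  rw [derivative_smul, derivative_X_pow, smul_eq_C_mul, ← mul_assoc, ← C_mul]
  push_cast
  rw [inv_mul_cancel₀ (by norm_cast; omega), C_1, one_mul, Nat.add_sub_cancel_left]

theorem derivative_truncExp_succ (n : ℕ) (p : K[X]) :
    derivative (truncExp (n + 1) p) = derivative p * truncExp n p := by
  rw [truncExp, sum_range_succ', derivative_add, map_sum, truncExp, mul_sum]
  simp only [pow_zero, derivative_smul, derivative_one, smul_zero, add_zero, derivative_pow]
  refine sum_congr rfl fun i _ => ?_
  rw [Nat.factorial_succ, Nat.add_sub_cancel, smul_eq_C_mul, smul_eq_C_mul]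
  have : ((((i + 1) * i ! : ℕ) : K))⁻¹ * ((i + 1 : ℕ) : K) = (i ! : K)⁻¹ := by
    push_cast; field_simp
  rw [← this, C_mul]
  push_cast
  ring

theorem X_pow_succ_dvd_of_X_pow_dvd_derivative {f : K[X]} {n : ℕ} (h₀ : f.coeff 0 = 0)
    (h : X ^ n ∣ derivative f) : X ^ (n + 1) ∣ f := by
  rw [X_pow_dvd_iff] at h ⊢
  rintro (_ | m) hm
  · exact h₀
  · have := h m (by omega)
    rw [coeff_derivative] at this
    exact (mul_eq_zero.mp this).resolve_right (Nat.cast_add_one_ne_zero m)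

theorem X_pow_succ_dvd_truncExp_mul_one_sub_X_sub_one (n : ℕ) :
    X ^ (n + 1) ∣ truncExp (n + 1) (truncNegLogOneSub n : K[X]) * (1 - X) - 1 := by
  set p : K[X] := truncNegLogOneSub n
  have hp₀ : p.eval 0 = 0 := by
    rw [← coeff_zero_eq_eval_zero]; exact X_dvd_iff.mp (X_dvd_truncNegLogOneSub n)
  obtain ⟨q, hq⟩ := pow_dvd_pow_of_dvd (X_dvd_truncNegLogOneSub n : X ∣ p) n
  refine X_pow_succ_dvd_of_X_pow_dvd_derivative ?_ ⟨-(truncExp n p + (n ! : K)⁻¹ • q), ?_⟩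
  · rw [coeff_sub, mul_coeff_zero, coeff_zero_eq_eval_zero, coeff_zero_eq_eval_zero,
      truncExp, eval_finsetSum, sum_eq_single_of_mem 0 (by simp)]
    · simp
    · intro i _ hi
      simp [hp₀, zero_pow hi]
  · have hp : derivative p * (1 - X) = 1 - X ^ n := by
      rw [derivative_truncNegLogOneSub, mul_comm, mul_neg_geom_sum]
    rw [derivative_sub, derivative_one, sub_zero, derivative_mul, derivative_truncExp_succ,
      truncExp_succ, derivative_sub, derivative_one, derivative_X,
      mul_right_comm, hp, hq]
    simp only [smul_eq_C_mul]
    ring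

theorem X_pow_succ_dvd_truncExp_sub_geom_sum (n : ℕ) :
    X ^ (n + 1) ∣
      truncExp (n + 1) (truncNegLogOneSub n : K[X]) - ∑ k ∈ range (n + 1), X ^ k := by
  set E := truncExp (n + 1) (truncNegLogOneSub n : K[X])
  set g : K[X] := ∑ k ∈ range (n + 1), X ^ k
  have hg : 1 - (1 - X) * g = X ^ (n + 1) := by rw [mul_neg_geom_sum, sub_sub_cancel]
  have : E - g = E * (1 - (1 - X) * g) + g * (E * (1 - X) - 1) := by ring
  rw [this, hg]
  exact dvd_add (dvd_mul_left _ _) ((X_pow_succ_dvd_truncExp_mul_one_sub_X_sub_one n).mul_left _)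

end Polynomial

section NilpotentExp

variable (𝕂 : Type*) {𝔸 : Type*} [Field 𝕂] [CharZero 𝕂] [Ring 𝔸] [Algebra 𝕂 𝔸]
  [TopologicalSpace 𝔸] [IsTopologicalRing 𝔸]

theorem NormedSpace.exp_eq_sum_of_pow_eq_zero {a : 𝔸} {n : ℕ} (h : a ^ n = 0) :
    NormedSpace.exp a = ∑ i ∈ range n, (i ! : 𝕂)⁻¹ • a ^ i := by
  rw [NormedSpace.exp_eq_tsum 𝕂]
  refine tsum_eq_sum fun i hi => ?_
  rw [pow_eq_zero_of_le (by simpa using hi) h, smul_zero]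

theorem NormedSpace.exp_sum_inv_smul_pow_eq_geom_sum {N : 𝔸} {n : ℕ} (h : N ^ (n + 1) = 0) :
    NormedSpace.exp (∑ k ∈ Icc 1 n, (k : 𝕂)⁻¹ • N ^ k) =
      ∑ k ∈ range (n + 1), N ^ k := by
  have hlog :
      aeval N (truncNegLogOneSub n : 𝕂[X]) = ∑ k ∈ Icc 1 n, (k : 𝕂)⁻¹ • N ^ k := by
    simp [truncNegLogOneSub, map_sum]
  have hnil : (aeval N (truncNegLogOneSub n : 𝕂[X])) ^ (n + 1) = 0 := by
    rw [← map_pow]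
    exact aeval_eq_zero_of_X_pow_dvd h (pow_dvd_pow_of_dvd (X_dvd_truncNegLogOneSub n) _)
  have hexp := aeval_eq_zero_of_X_pow_dvd h (X_pow_succ_dvd_truncExp_sub_geom_sum (K := 𝕂) n)
  rw [map_sub, sub_eq_zero] at hexp
  rw [← hlog, NormedSpace.exp_eq_sum_of_pow_eq_zero 𝕂 hnil]
  simpa [truncExp, map_sum] using hexp

end NilpotentExp

theorem Commute.sum_smul_pow {R 𝔸 : Type*} [CommSemiring R] [Semiring 𝔸] [Algebra R 𝔸]
    {a b : 𝔸} (h : Commute a b) (s t : Finset ℕ) (f g : ℕ → R) :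
    Commute (∑ k ∈ s, f k • a ^ k) (∑ k ∈ t, g k • b ^ k) :=
  Commute.sum_left _ _ _ fun i _ => Commute.sum_right _ _ _ fun j _ =>
    ((h.pow_pow i j).smul_left _).smul_right _

section ShiftMatrix

variable {d : ℕ}

theorem shiftU_mul_apply {o : Type*} (M : Matrix (Fin d) o ℂ) (i : Fin d) (j : o) :
    (shiftU d * M) i j = if h : (i : ℕ) + 1 < d then M ⟨i + 1, h⟩ j else 0 := by
  simp only [Matrix.mul_apply, shiftU, Matrix.of_apply, ite_mul, one_mul, zero_mul]
  split_ifs with h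
  · rw [Fintype.sum_eq_single ⟨i + 1, h⟩ fun t ht => if_neg fun h' => ht (Fin.ext h'.symm)]
    simp
  · exact sum_eq_zero fun t _ => if_neg fun (ht : (i : ℕ) + 1 = t) => h (ht ▸ t.isLt)

theorem shiftU_pow_mul_apply {o : Type*} (k : ℕ) (M : Matrix (Fin d) o ℂ) (i : Fin d) (j : o) :
    (shiftU d ^ k * M) i j = if h : (i : ℕ) + k < d then M ⟨i + k, h⟩ j else 0 := by
  induction k generalizing i with
  | zero => simp
  | succ k ih =>
    rw [pow_succ', Matrix.mul_assoc, shiftU_mul_apply]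
    split_ifs with h₁ h₂ h₂
    · rw [ih]; simp only [add_assoc, add_comm 1 k, dif_pos h₂]
    · rw [ih]; simp only [add_assoc, add_comm 1 k, dif_neg h₂]
    · omega
    · rfl

theorem shiftU_pow_self : shiftU d ^ d = 0 := by
  ext i j
  simpa using shiftU_pow_mul_apply d 1 i j

theorem det_one_sub_smul_shiftU (l : ℂ) : (1 - l • shiftU d).det = 1 := by
  rw [Matrix.det_of_isUpperTriangular]
  · simp [shiftU]
  · intro i j (hji : j < i)
    have : ¬ ((i : ℕ) + 1 = j) := by have : (j : ℕ) < i := hji; omega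
    simp [shiftU, hji.ne', this]

theorem det_eq_det_updateRow_last {n : ℕ} (M B : Matrix (Fin (n + 1)) (Fin (n + 1)) ℂ) (l : ℂ)
    (h : ∀ (i : Fin n) j, M i.castSucc j = B i.castSucc j + l * M i.succ j) :
    M.det = (B.updateRow (Fin.last n) (M (Fin.last n))).det := by
  have hmul : (1 - l • shiftU (n + 1)) * M = B.updateRow (Fin.last n) (M (Fin.last n)) := by
    ext i j
    rw [Matrix.sub_mul, Matrix.one_mul, Matrix.smul_mul, Matrix.sub_apply, Matrix.smul_apply,
      shiftU_mul_apply, smul_eq_mul]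
    induction i using Fin.lastCases with
    | last => simp
    | cast i =>
      rw [Matrix.updateRow_ne (Fin.castSucc_ne_last i), h, dif_pos (by simp)]
      simp [Fin.succ]
  rw [← hmul, Matrix.det_mul, det_one_sub_smul_shiftU, one_mul]

end ShiftMatrix

theorem Matrix.det_updateRow_finset_sum {R ι n : Type*} [CommRing R] [Fintype n]
    [DecidableEq n] (M : Matrix n n R) (r : n) (s : Finset ι) (f : ι → n → R) :
    (M.updateRow r (∑ k ∈ s, f k)).det = ∑ k ∈ s, (M.updateRow r (f k)).det :=
  (detRowAlternating : (n → R) [⋀^n]→ₗ[R] R).map_update_sum s r f M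

section MiwaShift

variable (d : ℕ) (A : Matrix (Fin d) (Fin d) ℂ) (x y : ℕ → ℂ) (l : ℂ)

theorem amat_miwa_shift :
    amat d A (fun k => x k + l ^ k / (k : ℂ)) y =
      (∑ k ∈ range d, (l • shiftU d) ^ k) * amat d A x y := by
  rcases d with _ | n
  · exact Subsingleton.elim _ _
  have hsplit : ∑ k ∈ Icc 1 (n + 1 - 1), (x k + l ^ k / (k : ℂ)) • shiftU (n + 1) ^ k =
      ∑ k ∈ Icc 1 n, (k : ℂ)⁻¹ • (l • shiftU (n + 1)) ^ k +
        ∑ k ∈ Icc 1 n, x k • shiftU (n + 1) ^ k := by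
    rw [Nat.add_sub_cancel, ← sum_add_distrib]
    refine sum_congr rfl fun k _ => ?_
    rw [_root_.smul_pow, smul_smul, ← add_smul, div_eq_inv_mul, add_comm (x k)]
  have hnil : (l • shiftU (n + 1)) ^ (n + 1) = 0 := by
    rw [_root_.smul_pow, shiftU_pow_self, smul_zero]
  have hcomm := (Commute.refl (shiftU (n + 1))).smul_left l
  rw [amat, amat, hsplit, Matrix.exp_add_of_commute _ _ (hcomm.sum_smul_pow _ _ _ _),
    NormedSpace.exp_sum_inv_smul_pow_eq_geom_sum ℂ hnil, Nat.add_sub_cancel]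
  simp only [mul_assoc]

theorem abar_eq_zero_of_le {i j : ℕ} (h : d ≤ i ∨ d ≤ j) : abar d A x y i j = 0 :=
  dif_neg (by omega)

theorem abar_miwa_shift (i j : ℕ) :
    abar d A (fun k => x k + l ^ k / (k : ℂ)) y i j =
      ∑ k ∈ range (d - i), l ^ k * abar d A x y (i + k) j := by
  by_cases h : i < d ∧ j < d
  · rw [abar, dif_pos h, amat_miwa_shift, Matrix.sum_mul, Matrix.sum_apply]
    simp only [_root_.smul_pow, Matrix.smul_mul, Matrix.smul_apply, shiftU_pow_mul_apply,
      smul_eq_mul]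
    rw [← sum_subset (range_subset_range.mpr (Nat.sub_le d i))]
    · refine sum_congr rfl fun k hk => ?_
      rw [mem_range] at hk
      rw [dif_pos (by omega), abar, dif_pos ⟨by omega, h.2⟩]
    · intro k _ hk
      rw [mem_range] at hk
      rw [dif_neg (by omega), mul_zero]
  · rw [abar, dif_neg h]
    refine (sum_eq_zero fun k hk => ?_).symm
    rw [mem_range] at hk
    rw [abar_eq_zero_of_le _ _ _ _ (by omega), mul_zero]

theorem abar_miwa_shift_eq_add (i j : ℕ) :
    abar d A (fun k => x k + l ^ k / (k : ℂ)) y i j =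
      abar d A x y i j + l * abar d A (fun k => x k + l ^ k / (k : ℂ)) y (i + 1) j := by
  rw [abar_miwa_shift, abar_miwa_shift]
  rcases lt_or_ge i d with hi | hi
  · rw [show d - i = d - (i + 1) + 1 by omega, sum_range_succ', mul_sum]
    simp only [pow_succ, pow_zero, add_zero, one_mul, add_comm (abar d A x y i j)]
    congr 1
    refine sum_congr rfl fun k _ => ?_
    rw [add_assoc, add_comm 1 k]
    ring
  · simp [show d - i = 0 by omega, show d - (i + 1) = 0 by omega, abar_eq_zero_of_le, hi]

theorem tauF_miwa_shift (s : ℕ) :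
    tauF d A (fun k => x k + l ^ k / (k : ℂ)) y (s + 1) =
      ∑ k ∈ range (d - s), l ^ k * Matrix.det (fun i j : Fin (s + 1) =>
        abar d A x y (if (i : ℕ) < s then (i : ℕ) else s + k) (j : ℕ)) := by
  set a' : ℕ → ℕ → ℂ := abar d A (fun k => x k + l ^ k / (k : ℂ)) y
  have hrow : Matrix.of (fun i j : Fin (s + 1) => a' i j) (Fin.last s) =
      ∑ k ∈ range (d - s), l ^ k • fun j : Fin (s + 1) => abar d A x y (s + k) j := by
    ext j
    simp [a', abar_miwa_shift, Finset.sum_apply]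
  refine (det_eq_det_updateRow_last (Matrix.of fun i j : Fin (s + 1) => a' i j)
    (Matrix.of fun i j : Fin (s + 1) => abar d A x y i j) l
    fun i j => by simpa using abar_miwa_shift_eq_add d A x y l i j).trans ?_
  rw [hrow, Matrix.det_updateRow_finset_sum]
  refine sum_congr rfl fun k _ => ?_
  rw [Matrix.det_updateRow_smul]
  congr 2
  ext i j
  induction i using Fin.lastCases with
  | last => simp
  | cast i => simp

end MiwaShift

theorem wstar_generating_sum_general (d s : ℕ)
    (A : Matrix (Fin d) (Fin d) ℂ) (x y : ℕ → ℂ) (l : ℂ) :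
    ∑ k ∈ Finset.range (d - s), l ^ k * wstarInf d A x y s k =
      tauF d A (fun k => x k + l ^ k / (k : ℂ)) y (s + 1) / tauF d A x y (s + 1) := by
  rw [tauF_miwa_shift, sum_div]
  exact sum_congr rfl fun k _ => (mul_div_assoc _ _ _).symm

/-- The generating sum of the inverse wave-matrix entries is a Miwa
shift of the tau-function:
`∑_{k=0}^{d-s-1} λ^k ŵ*^{(∞)}_k(s) = τ(s+1, x + ε(λ), y) / τ(s+1, x, y)`,
where `ε(λ) = (λ, λ²/2, λ³/3, …)`. -/
theorem wstar_generating_sum (d s : ℕ) (hs : s + 1 ≤ d)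
    (A : Matrix (Fin d) (Fin d) ℂ) (x y : ℕ → ℂ) (l : ℂ)
    (hτ : tauF d A x y (s + 1) ≠ 0) :
    ∑ k ∈ Finset.range (d - s), l ^ k * wstarInf d A x y s k =
      tauF d A (fun k => x k + l ^ k / (k : ℂ)) y (s + 1) / tauF d A x y (s + 1) :=
  wstar_generating_sum_general d s A x y l
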